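/- arXiv:2303.17414 — 2 statements merged into one kernel-verified Lean document; each statement's English description precedes it below -/
import Mathlib

section
/- Let M > 1 and let C denote the set of continuously differentiable functions f : [0,1] → [1,M] with f(0) = 1, f(1) = M and f'(x) ≠ 0 for all x ∈ [0,1]. Then there exists a map f ↦ g_f assigning to each f ∈ C a continuous, strictly increasing quasi-isometry g_f of [0,∞) such that S_{g_f} = [1,M] for every f ∈ C, and such that whenever f₁ ≠ f₂ in C, the quasi-isometries g_{f₁} and g_{f₂} are not H-equivalent. In particular, C embeds into H_{[1,M]}/H. -/
open Filter Topology

/-- A quasi-isometry of the ray `[0,∞)`, modelled as a real function: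
it maps nonnegatives to nonnegatives, satisfies the two-sided quasi-isometry
inequality with a constant `K > 1` on nonnegative arguments, and its image is
coarsely dense in `[0,∞)`. -/
def IsQI (g : ℝ → ℝ) : Prop :=
  (∀ x, 0 ≤ x → 0 ≤ g x) ∧
  (∃ K : ℝ, 1 < K ∧ ∀ x y, 0 ≤ x → 0 ≤ y →
    (1 / K) * |x - y| - K ≤ |g x - g y| ∧ |g x - g y| ≤ K * |x - y| + K) ∧
  (∃ K' : ℝ, 0 < K' ∧ ∀ z, 0 ≤ z → ∃ x, 0 ≤ x ∧ |g x - z| ≤ K')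

/-- `Sset g` is the set of all subsequential limits of `g x / x` as `x → ∞`:
limits of `g (u n) / u n` over sequences `u n → ∞` for which this quotient converges. -/
def Sset (g : ℝ → ℝ) : Set ℝ :=
  { c | ∃ u : ℕ → ℝ, (∀ n, 0 ≤ u n) ∧ Tendsto u atTop atTop ∧
      Tendsto (fun n => g (u n) / u n) atTop (𝓝 c) }

/-- `g` is piecewise linear on `[0,∞)`: there is a strictly increasing divergent
sequence of breakpoints starting at `0` on whose consecutive intervals `g` is affine. -/
def IsPL (g : ℝ → ℝ) : Prop :=
  ∃ t : ℕ → ℝ, t 0 = 0 ∧ StrictMono t ∧ Tendsto t atTop atTop ∧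
    ∀ n, ∃ lam : ℝ, ∀ x ∈ Set.Icc (t n) (t (n + 1)),
      g x = g (t n) + lam * (x - t n)

/-- Two quasi-isometries `f, g` of `[0,∞)` are H-equivalent if `f` is boundedly close
(on `[0,∞)`) to `h ∘ g` for some quasi-isometry `h` with `h y / y → 1`. -/
def HEquiv (f g : ℝ → ℝ) : Prop :=
  ∃ h : ℝ → ℝ, IsQI h ∧ Tendsto (fun y => h y / y) atTop (𝓝 1) ∧
    ∃ C : ℝ, ∀ x, 0 ≤ x → |f x - h (g x)| ≤ C

/-- Membership in the class `C^{[1,M]}_{[0,1]}`: continuously differentiable on `[0,1]`,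
mapping into `[1,M]`, with `f 0 = 1`, `f 1 = M` and nonvanishing derivative. -/
def CClass (M : ℝ) (f : ℝ → ℝ) : Prop :=
  ContDiffOn ℝ 1 f (Set.Icc 0 1) ∧
  (∀ x ∈ Set.Icc (0 : ℝ) 1, f x ∈ Set.Icc 1 M) ∧
  f 0 = 1 ∧ f 1 = M ∧
  (∀ x ∈ Set.Icc (0 : ℝ) 1, derivWithin f (Set.Icc 0 1) x ≠ 0)

/-! Sample `f` along a sequence `p n` in `[0,1]` that visits every rational point infinitely
often, and let `g_f` be the map whose slope on `[(n+1)!, (n+2)!]` is `f (p n)`. All slopes lie in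
`[1, M]`, so `g_f` is bi-Lipschitz, and since the blocks grow factorially, `g_f x / x` at the end
of block `n` is within `M / (n + 2)` of the slope on that block. Hence every value `f q` of `f` at
a rational point (in particular `f 0 = 1` and `f 1 = M`) lies in `S_{g_f}`, and as `S_{g_f}` is an
interval it is `[1, M]`. If `g_{f₁}` is boundedly close to `h ∘ g_{f₂}` with `h y / y → 1`, the
ratios of `g_{f₁}` and `g_{f₂}` along the block ends sampling `q` have the same limit, so
`f₁ q = f₂ q` for all rational `q`, and `f₁ = f₂` on `[0,1]` by continuity. -/

open Set MeasureTheory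

section General

variable {g : ℝ → ℝ}

lemma isQI_of_sub_mem_Icc {K : ℝ} (hK : 1 ≤ K) (hg : Continuous g) (hg0 : g 0 = 0)
    (h : ∀ x y, x ≤ y → g y - g x ∈ Icc (y - x) (K * (y - x))) : IsQI g := by
  have habs : ∀ x y, |x - y| ≤ |g x - g y| ∧ |g x - g y| ≤ K * |x - y| := by
    intro x y
    rcases le_total x y with hxy | hxy
    · obtain ⟨h₁, h₂⟩ := h x y hxy
      rw [abs_sub_comm x, abs_sub_comm (g x), abs_of_nonneg (sub_nonneg.2 hxy),
        abs_of_nonneg (by linarith)]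
      exact ⟨h₁, h₂⟩
    · obtain ⟨h₁, h₂⟩ := h y x hxy
      rw [abs_of_nonneg (sub_nonneg.2 hxy), abs_of_nonneg (by linarith)]
      exact ⟨h₁, h₂⟩
  have hself : ∀ x, 0 ≤ x → x ≤ g x := fun x hx => by simpa [hg0] using (h 0 x hx).1
  refine ⟨fun x hx => hx.trans (hself x hx), ⟨K + 1, by linarith, fun x y _ _ => ?_⟩,
    ⟨1, one_pos, fun z hz => ?_⟩⟩
  · obtain ⟨h₁, h₂⟩ := habs x y
    have : 1 / (K + 1) * |x - y| ≤ |x - y| :=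
      mul_le_of_le_one_left (abs_nonneg _) ((div_le_one (by linarith)).2 (by linarith))
    constructor <;> nlinarith [abs_nonneg (x - y)]
  · obtain ⟨x, hx, rfl⟩ := intermediate_value_Icc hz hg.continuousOn
      (show z ∈ Icc (g 0) (g z) from ⟨hg0.symm ▸ hz, hself z hz⟩)
    exact ⟨x, hx.1, by simp⟩

lemma Sset_subset_Icc {a b : ℝ} (h : ∀ x, 0 < x → g x / x ∈ Icc a b) : Sset g ⊆ Icc a b :=
  fun _ ⟨_, _, hu, hc⟩ => isClosed_Icc.mem_of_tendsto hc <|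
    (hu.eventually_gt_atTop 0).mono fun _ hn => h _ hn

lemma ordConnected_Sset (hg : ContinuousOn g (Ioi 0)) : (Sset g).OrdConnected := by
  refine ⟨fun a ha b hb c hc => ?_⟩
  rcases hc.1.eq_or_lt with rfl | hac
  · exact ha
  rcases hc.2.eq_or_lt with rfl | hcb
  · exact hb
  obtain ⟨u, -, hu, hua⟩ := ha
  obtain ⟨v, -, hv, hvb⟩ := hb
  obtain ⟨N, hN⟩ := eventually_atTop.1 <|
    (hu.eventually_gt_atTop 0).and <| (hv.eventually_gt_atTop 0).and <|
      (hua.eventually_lt_const hac).and (hvb.eventually_const_lt hcb)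
  have hivt : ∀ n, ∃ w ∈ uIcc (u (n + N)) (v (n + N)), g w / w = c := by
    intro n
    obtain ⟨hu0, hv0, hua, hvb⟩ := hN (n + N) (Nat.le_add_left N n)
    have hpos : ∀ w ∈ uIcc (u (n + N)) (v (n + N)), 0 < w := fun w hw =>
      (lt_min hu0 hv0).trans_le hw.1
    exact intermediate_value_uIcc
      ((hg.mono fun w hw => hpos w hw).div continuousOn_id fun w hw => (hpos w hw).ne')
      (Icc_subset_uIcc ⟨hua.le, hvb.le⟩)
  choose w hw hwc using hivt
  have hmin : Tendsto (fun n => min (u (n + N)) (v (n + N))) atTop atTop :=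
    tendsto_atTop.2 fun c => (((tendsto_atTop.1 hu c).and (tendsto_atTop.1 hv c)).mono
      fun _ h => le_min h.1 h.2).filter_mono (tendsto_add_atTop_nat N)
  refine ⟨w, fun n => ?_, tendsto_atTop_mono (fun n => (hw n).1) hmin, ?_⟩
  · obtain ⟨hu0, hv0, -⟩ := hN (n + N) (Nat.le_add_left N n)
    exact (lt_min hu0 hv0).le.trans (hw n).1
  · simp only [hwc, tendsto_const_nhds]

lemma HEquiv.eq_of_tendsto {f : ℝ → ℝ} {u : ℕ → ℝ} {a b : ℝ} (hfg : HEquiv f g)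
    (hu : Tendsto u atTop atTop) (hf : Tendsto (fun n => f (u n) / u n) atTop (𝓝 a))
    (hg : Tendsto (fun n => g (u n) / u n) atTop (𝓝 b)) (hb : 0 < b) : a = b := by
  obtain ⟨h, -, hh, C, hC⟩ := hfg
  have hupos := hu.eventually_gt_atTop 0
  have hgu : Tendsto (fun n => g (u n)) atTop atTop :=
    (hg.pos_mul_atTop hb hu).congr' <| hupos.mono fun n hn => div_mul_cancel₀ _ hn.ne'
  have hhg : Tendsto (fun n => h (g (u n)) / u n) atTop (𝓝 b) := by
    refine (one_mul b ▸ (hh.comp hgu).mul hg).congr' ?_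
    filter_upwards [hupos, hgu.eventually_gt_atTop 0] with n hn hgn
    simp only [Function.comp_apply]
    field_simp
  have hdiff : Tendsto (fun n => (f (u n) - h (g (u n))) / u n) atTop (𝓝 0) := by
    refine squeeze_zero_norm' ?_ ((tendsto_const_nhds (x := C)).div_atTop hu)
    filter_upwards [hupos] with n hn
    rw [norm_div, Real.norm_eq_abs, Real.norm_eq_abs, abs_of_pos hn]
    exact div_le_div_of_nonneg_right (hC _ hn.le) hn.le
  refine tendsto_nhds_unique hf ((zero_add b ▸ hdiff.add hhg).congr fun n => ?_)
  rw [← add_div, sub_add_cancel]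

end General

lemma eqOn_Icc_of_forall_rat {f₁ f₂ : ℝ → ℝ} {a b : ℝ} (hab : a < b)
    (h₁ : ContinuousOn f₁ (Icc a b)) (h₂ : ContinuousOn f₂ (Icc a b))
    (h : ∀ q : ℚ, (q : ℝ) ∈ Icc a b → f₁ q = f₂ q) : EqOn f₁ f₂ (Icc a b) := by
  have hdense : Icc a b ⊆ closure (Icc a b ∩ range ((↑) : ℚ → ℝ)) := by
    refine (closure_Ioo hab.ne).symm.subset.trans <| closure_minimal
      ((Rat.denseRange_cast.open_subset_closure_inter isOpen_Ioo).trans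
        (closure_mono (inter_subset_inter_left _ Ioo_subset_Icc_self))) isClosed_closure
  refine EqOn.of_subset_closure ?_ h₁ h₂ inter_subset_left hdense
  rintro _ ⟨hx, q, rfl⟩
  exact h q hx

lemma exists_seq_frequently_eq_rat :
    ∃ p : ℕ → ℝ, (∀ n, p n ∈ Icc 0 1) ∧ ∀ q : ℚ, (q : ℝ) ∈ Icc 0 1 → ∃ᶠ n in atTop, p n = q := by
  have : Nonempty {q : ℚ // (q : ℝ) ∈ Icc 0 1} := ⟨⟨0, by simp⟩⟩
  obtain ⟨r, hr⟩ := exists_surjective_nat {q : ℚ // (q : ℝ) ∈ Icc 0 1}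
  refine ⟨fun n => (r n.unpair.1 : ℚ), fun n => (r _).2, fun q hq => ?_⟩
  obtain ⟨m, hm⟩ := hr ⟨q, hq⟩
  refine frequently_atTop.2 fun k => ⟨Nat.pair m k, Nat.right_le_pair m k, ?_⟩
  simp [hm]

noncomputable section

def knot (n : ℕ) : ℝ := (n + 1).factorial

lemma knot_pos (n : ℕ) : 0 < knot n := by
  unfold knot; exact_mod_cast Nat.factorial_pos _

lemma knot_succ (n : ℕ) : knot (n + 1) = (n + 2) * knot n := by
  simp only [knot, Nat.factorial_succ (n + 1)]
  push_cast
  ring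

lemma knot_strictMono : StrictMono knot :=
  strictMono_nat_of_lt_succ fun n => by rw [knot_succ]; nlinarith [knot_pos n]

lemma tendsto_knot_atTop : Tendsto knot atTop atTop := by
  refine tendsto_atTop_mono (fun n => ?_) tendsto_natCast_atTop_atTop
  have : n + 1 ≤ (n + 1).factorial := Nat.self_le_factorial _
  unfold knot
  exact_mod_cast (Nat.le_succ n).trans this

lemma tendsto_knot_comp_add_one {φ : ℕ → ℕ} (hφ : Tendsto φ atTop atTop) :
    Tendsto (fun j => knot (φ j + 1)) atTop atTop :=
  tendsto_knot_atTop.comp ((tendsto_add_atTop_nat 1).comp hφ)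

lemma exists_lt_knot_succ (x : ℝ) : ∃ n, x < knot (n + 1) :=
  ((tendsto_knot_comp_add_one tendsto_id).eventually_gt_atTop x).exists

open Classical in
def blockIndex (x : ℝ) : ℕ := Nat.find (exists_lt_knot_succ x)

lemma blockIndex_eq {n : ℕ} {x : ℝ} (h₁ : knot n ≤ x) (h₂ : x < knot (n + 1)) :
    blockIndex x = n := by
  classical
  refine (Nat.find_eq_iff _).2 ⟨h₂, fun m hm => ?_⟩
  exact not_lt.2 (h₁.trans' (knot_strictMono.monotone (Nat.succ_le_of_lt hm)))

lemma blockIndex_mono : Monotone blockIndex := by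
  classical
  exact fun x y hxy => Nat.find_mono fun n hn => hxy.trans_lt hn

def stepSlope (s : ℕ → ℝ) (x : ℝ) : ℝ := s (blockIndex x)

def pwLinear (s : ℕ → ℝ) (x : ℝ) : ℝ := ∫ t in (0)..x, stepSlope s t

lemma measurable_stepSlope (s : ℕ → ℝ) : Measurable (stepSlope s) :=
  measurable_from_nat.comp blockIndex_mono.measurable

section PwLinear

variable {M : ℝ} {s : ℕ → ℝ}

lemma intervalIntegrable_stepSlope (hs : ∀ n, s n ∈ Icc 1 M) (a b : ℝ) :
    IntervalIntegrable (stepSlope s) volume a b := by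
  refine (intervalIntegrable_const (c := M)).mono_fun
    (measurable_stepSlope s).aestronglyMeasurable (Eventually.of_forall fun x => ?_)
  obtain ⟨h₁, h₂⟩ := hs (blockIndex x)
  change ‖s (blockIndex x)‖ ≤ ‖M‖
  rw [Real.norm_eq_abs, Real.norm_eq_abs, abs_of_pos (by linarith),
    abs_of_pos (by linarith)]
  exact h₂

lemma pwLinear_sub_pwLinear (hs : ∀ n, s n ∈ Icc 1 M) (x y : ℝ) :
    pwLinear s y - pwLinear s x = ∫ t in x..y, stepSlope s t :=
  intervalIntegral.integral_interval_sub_left (intervalIntegrable_stepSlope hs _ _)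
    (intervalIntegrable_stepSlope hs _ _)

lemma pwLinear_sub_mem_Icc (hs : ∀ n, s n ∈ Icc 1 M) {x y : ℝ} (hxy : x ≤ y) :
    pwLinear s y - pwLinear s x ∈ Icc (y - x) (M * (y - x)) := by
  rw [pwLinear_sub_pwLinear hs]
  constructor
  · simpa using intervalIntegral.integral_mono_on hxy intervalIntegrable_const
      (intervalIntegrable_stepSlope hs x y) fun t _ => (hs _).1
  · simpa [mul_comm] using intervalIntegral.integral_mono_on hxy
      (intervalIntegrable_stepSlope hs x y) intervalIntegrable_const
      fun t _ => (hs _).2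

lemma pwLinear_knot_succ (hs : ∀ n, s n ∈ Icc 1 M) (n : ℕ) :
    pwLinear s (knot (n + 1)) = pwLinear s (knot n) + s n * (knot (n + 1) - knot n) := by
  rw [← sub_eq_iff_eq_add', pwLinear_sub_pwLinear hs,
    intervalIntegral.integral_congr_Ioo_of_le (knot_strictMono n.lt_add_one).le
      (f := stepSlope s) (g := fun _ => s n) fun t ht => congrArg s (blockIndex_eq ht.1.le ht.2)]
  simp [mul_comm]

lemma pwLinear_zero (s : ℕ → ℝ) : pwLinear s 0 = 0 := intervalIntegral.integral_same

lemma continuous_pwLinear (hs : ∀ n, s n ∈ Icc 1 M) : Continuous (pwLinear s) :=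
  intervalIntegral.continuous_primitive (intervalIntegrable_stepSlope hs) 0

lemma strictMono_pwLinear (hs : ∀ n, s n ∈ Icc 1 M) : StrictMono (pwLinear s) := fun x y hxy => by
  linarith [(pwLinear_sub_mem_Icc hs hxy.le).1]

lemma pwLinear_mem_Icc (hs : ∀ n, s n ∈ Icc 1 M) {x : ℝ} (hx : 0 ≤ x) :
    pwLinear s x ∈ Icc x (M * x) := by
  simpa [pwLinear_zero] using pwLinear_sub_mem_Icc hs hx

lemma isQI_pwLinear (hs : ∀ n, s n ∈ Icc 1 M) : IsQI (pwLinear s) :=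
  isQI_of_sub_mem_Icc ((hs 0).1.trans (hs 0).2) (continuous_pwLinear hs) (pwLinear_zero s)
    fun _ _ => pwLinear_sub_mem_Icc hs

lemma abs_pwLinear_knot_succ_div_sub_le (hs : ∀ n, s n ∈ Icc 1 M) (n : ℕ) :
    |pwLinear s (knot (n + 1)) / knot (n + 1) - s n| ≤ M / (n + 2) := by
  have hk := knot_pos n
  obtain ⟨h₁, h₂⟩ := pwLinear_mem_Icc hs hk.le
  obtain ⟨hs₁, hs₂⟩ := hs n
  have hnum : |pwLinear s (knot n) - s n * knot n| ≤ M * knot n :=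
    abs_le.2 ⟨by nlinarith, by nlinarith⟩
  have hsplit : pwLinear s (knot (n + 1)) / knot (n + 1) - s n
      = (pwLinear s (knot n) - s n * knot n) / knot (n + 1) := by
    rw [pwLinear_knot_succ hs, knot_succ]
    field_simp
    ring
  rw [hsplit, abs_div, abs_of_pos (knot_pos _), div_le_div_iff₀ (knot_pos _) (by positivity),
    knot_succ]
  nlinarith

lemma tendsto_pwLinear_knot_div (hs : ∀ n, s n ∈ Icc 1 M) {φ : ℕ → ℕ}
    (hφ : Tendsto φ atTop atTop) {c : ℝ} (hc : ∀ j, s (φ j) = c) :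
    Tendsto (fun j => pwLinear s (knot (φ j + 1)) / knot (φ j + 1)) atTop (𝓝 c) := by
  have hbound : Tendsto (fun j => M / ((φ j : ℝ) + 2)) atTop (𝓝 0) :=
    tendsto_const_nhds.div_atTop <| tendsto_atTop_add_const_right _ 2 <|
      tendsto_natCast_atTop_atTop.comp hφ
  refine tendsto_iff_norm_sub_tendsto_zero.2 <| squeeze_zero (fun _ => norm_nonneg _) ?_ hbound
  intro j
  rw [Real.norm_eq_abs, ← hc j]
  exact abs_pwLinear_knot_succ_div_sub_le hs (φ j)

lemma mem_Sset_pwLinear (hs : ∀ n, s n ∈ Icc 1 M) {c : ℝ} (hc : ∃ᶠ n in atTop, s n = c) :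
    c ∈ Sset (pwLinear s) := by
  obtain ⟨φ, hφ, hφc⟩ := extraction_of_frequently_atTop hc
  exact ⟨fun j => knot (φ j + 1), fun _ => (knot_pos _).le,
    tendsto_knot_comp_add_one hφ.tendsto_atTop, tendsto_pwLinear_knot_div hs hφ.tendsto_atTop hφc⟩

lemma Sset_pwLinear (hs : ∀ n, s n ∈ Icc 1 M) (h₁ : ∃ᶠ n in atTop, s n = 1)
    (hM : ∃ᶠ n in atTop, s n = M) : Sset (pwLinear s) = Icc 1 M := by
  refine (Sset_subset_Icc fun x hx => ?_).antisymm ?_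
  · obtain ⟨hl, hu⟩ := pwLinear_mem_Icc hs hx.le
    exact ⟨(one_le_div hx).2 hl, (div_le_iff₀ hx).2 hu⟩
  · exact (ordConnected_Sset (continuous_pwLinear hs).continuousOn).out
      (mem_Sset_pwLinear hs h₁) (mem_Sset_pwLinear hs hM)

lemma HEquiv.eq_of_frequently_slopes_eq {s₁ s₂ : ℕ → ℝ} (hs₁ : ∀ n, s₁ n ∈ Icc 1 M)
    (hs₂ : ∀ n, s₂ n ∈ Icc 1 M) (hH : HEquiv (pwLinear s₁) (pwLinear s₂)) {a b : ℝ}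
    (h : ∃ᶠ n in atTop, s₁ n = a ∧ s₂ n = b) : a = b := by
  obtain ⟨φ, hφ, hφab⟩ := extraction_of_frequently_atTop h
  have hb : 0 < b := zero_lt_one.trans_le ((hφab 0).2 ▸ (hs₂ _).1)
  exact hH.eq_of_tendsto (tendsto_knot_comp_add_one hφ.tendsto_atTop)
    (tendsto_pwLinear_knot_div hs₁ hφ.tendsto_atTop fun j => (hφab j).1)
    (tendsto_pwLinear_knot_div hs₂ hφ.tendsto_atTop fun j => (hφab j).2) hb

end PwLinear

end

theorem stmt7_general (M : ℝ) :
    ∃ G : (ℝ → ℝ) → (ℝ → ℝ),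
      (∀ f : ℝ → ℝ, CClass M f →
        IsQI (G f) ∧ ContinuousOn (G f) (Set.Ici 0) ∧ StrictMonoOn (G f) (Set.Ici 0) ∧
        Sset (G f) = Set.Icc 1 M) ∧
      (∀ f₁ f₂ : ℝ → ℝ, CClass M f₁ → CClass M f₂ →
        (∃ x ∈ Set.Icc (0 : ℝ) 1, f₁ x ≠ f₂ x) → ¬ HEquiv (G f₁) (G f₂)) := by
  obtain ⟨p, hp01, hp⟩ := exists_seq_frequently_eq_rat
  have hslopes : ∀ f, CClass M f → ∀ n, f (p n) ∈ Icc 1 M := fun f hf n => hf.2.1 _ (hp01 n)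
  refine ⟨fun f => pwLinear (f ∘ p), fun f hf => ?_, fun f₁ f₂ hf₁ hf₂ ⟨x, hx, hne⟩ hH => ?_⟩
  · have hs := hslopes f hf
    have hvalue : ∀ q : ℚ, (q : ℝ) ∈ Icc 0 1 → ∃ᶠ n in atTop, f (p n) = f q :=
      fun q hq => (hp q hq).mono fun n hn => by rw [hn]
    refine ⟨isQI_pwLinear hs, (continuous_pwLinear hs).continuousOn,
      (strictMono_pwLinear hs).strictMonoOn _, Sset_pwLinear hs ?_ ?_⟩
    · simpa [hf.2.2.1] using hvalue 0 (by simp)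
    · simpa [hf.2.2.2.1] using hvalue 1 (by simp)
  · refine hne <| eqOn_Icc_of_forall_rat zero_lt_one hf₁.1.continuousOn hf₂.1.continuousOn
      (fun q hq => ?_) hx
    exact hH.eq_of_frequently_slopes_eq (hslopes f₁ hf₁) (hslopes f₂ hf₂)
      ((hp q hq).mono fun n hn => by simp [hn])

/-- the class `C^{[1,M]}_{[0,1]}` embeds in `H_{[1,M]}/H`: there is a map
`f ↦ g_f` into continuous strictly increasing quasi-isometries with `S_{g_f} = [1,M]`,
such that distinct `f`'s give non-H-equivalent quasi-isometries. -/
theorem stmt7 (M : ℝ) (hM : 1 < M) :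
    ∃ G : (ℝ → ℝ) → (ℝ → ℝ),
      (∀ f : ℝ → ℝ, CClass M f →
        IsQI (G f) ∧ ContinuousOn (G f) (Set.Ici 0) ∧ StrictMonoOn (G f) (Set.Ici 0) ∧
        Sset (G f) = Set.Icc 1 M) ∧
      (∀ f₁ f₂ : ℝ → ℝ, CClass M f₁ → CClass M f₂ →
        (∃ x ∈ Set.Icc (0 : ℝ) 1, f₁ x ≠ f₂ x) → ¬ HEquiv (G f₁) (G f₂)) :=
  stmt7_general M
end

section
/- Let f₁, …, f_n be strictly increasing homeomorphisms of [0,∞), each a quasi-isometry, and suppose that for each i it is not the case that f_i(x)/x → 1 as x → ∞ (i.e., each class [f_i] is a nontrivial element of QI(ℝ₊)/H). Then there exist signs ε_i ∈ {+1, −1} such that for every nonempty finite sequence of indices i₁, …, i_m, the composition w = f_{i₁}^{ε_{i₁}} ∘ f_{i₂}^{ε_{i₂}} ∘ ⋯ ∘ f_{i_m}^{ε_{i_m}} does not satisfy w(x)/x → 1 as x → ∞. (By Navas's criterion this proves that the quotient group QI(ℝ₊)/H is left-orderable.) -/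
open Filter Topology

/-!
For an ultrafilter `𝒰` on `ℝ` converging to `+∞`, the rescaling `g ↦ (τ ↦ lim_𝒰 g (s τ) / s)`
sends increasing quasi-isometric homeomorphisms of `[0,∞)` to increasing self-maps of `[0,∞)`
(their action on an asymptotic cone) and respects composition. It fixes every `τ > 0` when
`g x / x → 1`, while each `fᵢ` has an ultrafilter `𝒰ᵢ` under which it moves `1`.

Left-order the increasing self-maps of `(0,∞)` by comparing with the identity at the first moved
point for a well-order of `ℝ`. Give `fᵢ` the sign that makes it positive under the first `𝒰ₖ`
(in the order of the indices) that moves it. Under the first `𝒰ₖ` that moves some letter of a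
word, every letter is then positive or acts trivially, so the word is positive, hence moves some
point, which is impossible if `w x / x → 1`.
-/

open Set

local infix:50 " ≺ " => @WellOrderingRel ℝ

def IsFirst (S : Set ℝ) (a : ℝ) : Prop := a ∈ S ∧ ∀ b ∈ S, ¬ b ≺ a

lemma exists_isFirst {S : Set ℝ} (hS : S.Nonempty) : ∃ a, IsFirst S a :=
  IsWellFounded.wf.has_min S hS

lemma IsFirst.eq {S : Set ℝ} {a b : ℝ} (ha : IsFirst S a) (hb : IsFirst S b) : a = b :=
  (trichotomous_of (· ≺ ·) a b).resolve_left (hb.2 a ha.1) |>.resolve_right (ha.2 b hb.1)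

section LeftOrder

def movedSet (Ψ : ℝ → ℝ) : Set ℝ := {x | 0 < x ∧ Ψ x ≠ x}

/-- The positive cone (with the identity) of a left order on increasing self-maps of `(0,∞)`:
the first moved point, for a fixed well-order `≺` of `ℝ`, is moved up. -/
def MovesUpFirst (Ψ : ℝ → ℝ) : Prop := ∀ a, IsFirst (movedSet Ψ) a → a < Ψ a

variable {Ψ Χ Ψ₁ Ψ₂ : ℝ → ℝ}

lemma apply_eq_of_notMem_movedSet {x : ℝ} (hx : 0 < x) (h : x ∉ movedSet Ψ) : Ψ x = x :=
  not_not.mp fun hne => h ⟨hx, hne⟩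

lemma movedSet_eq_of_invOn (h : InvOn Χ Ψ (Ioi 0) (Ioi 0)) : movedSet Ψ = movedSet Χ := by
  have key : ∀ {Ψ Χ : ℝ → ℝ}, LeftInvOn Χ Ψ (Ioi 0) → movedSet Χ ⊆ movedSet Ψ :=
    fun hl x ⟨hx, hne⟩ => ⟨hx, fun hfix => hne (by simpa [hfix] using hl hx)⟩
  exact (key h.2).antisymm (key h.1)

lemma movesUpFirst_or_of_invOn (hΧ : StrictMonoOn Χ (Ici 0)) (hΨ : MapsTo Ψ (Ici 0) (Ici 0))
    (h : InvOn Χ Ψ (Ioi 0) (Ioi 0)) : MovesUpFirst Ψ ∨ MovesUpFirst Χ := by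
  by_contra! hcon
  simp only [MovesUpFirst, not_forall, not_lt] at hcon
  obtain ⟨⟨a, ha, hΨa⟩, ⟨b, hb, hΧb⟩⟩ := hcon
  rw [← movedSet_eq_of_invOn h] at hb
  obtain rfl := ha.eq hb
  have hlt : Ψ a < a := lt_of_le_of_ne hΨa ha.1.2
  have := hΧ (hΨ (le_of_lt ha.1.1)) (le_of_lt ha.1.1) hlt
  rw [h.1 ha.1.1] at this
  exact absurd this (not_lt.mpr hΧb)

lemma isFirst_movedSet_comp (hΨ₁ : StrictMonoOn Ψ₁ (Ici 0)) (h₁ : MovesUpFirst Ψ₁)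
    (h₂ : MovesUpFirst Ψ₂) {c : ℝ} (hc : IsFirst (movedSet Ψ₁ ∪ movedSet Ψ₂) c) :
    IsFirst (movedSet (Ψ₁ ∘ Ψ₂)) c ∧ c < Ψ₁ (Ψ₂ c) := by
  have hc0 : 0 < c := by rcases hc.1 with h | h <;> exact h.1
  have le_of_moves {Ψ : ℝ → ℝ} (hΨ : MovesUpFirst Ψ)
      (hsub : movedSet Ψ ⊆ movedSet Ψ₁ ∪ movedSet Ψ₂) : c ≤ Ψ c := by
    by_cases hmem : c ∈ movedSet Ψ
    · exact (hΨ c ⟨hmem, fun b hb => hc.2 b (hsub hb)⟩).le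
    · exact (apply_eq_of_notMem_movedSet hc0 hmem).ge
  have hc₁ := le_of_moves h₁ subset_union_left
  have hc₂ := le_of_moves h₂ subset_union_right
  have hup : c < Ψ₁ (Ψ₂ c) := by
    rcases hc₂.lt_or_eq with hlt | heq
    · exact hc₁.trans_lt (hΨ₁ hc0.le (hc0.trans hlt).le hlt)
    · have hmem : c ∈ movedSet Ψ₁ := hc.1.resolve_right fun h => h.2 heq.symm
      rw [← heq]
      exact h₁ c ⟨hmem, fun b hb => hc.2 b (Or.inl hb)⟩
  refine ⟨⟨⟨hc0, hup.ne'⟩, fun b hb hbc => hb.2 ?_⟩, hup⟩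
  have hfix {Ψ : ℝ → ℝ} (hsub : movedSet Ψ ⊆ movedSet Ψ₁ ∪ movedSet Ψ₂) : Ψ b = b :=
    apply_eq_of_notMem_movedSet hb.1 fun hmem => hc.2 b (hsub hmem) hbc
  simp only [Function.comp, hfix subset_union_right, hfix subset_union_left]

lemma movedSet_comp_subset : movedSet (Ψ₁ ∘ Ψ₂) ⊆ movedSet Ψ₁ ∪ movedSet Ψ₂ := by
  intro x ⟨hx, hne⟩
  by_contra! h
  simp only [mem_union, not_or] at h
  exact hne (by simp [apply_eq_of_notMem_movedSet hx h.1, apply_eq_of_notMem_movedSet hx h.2])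

lemma MovesUpFirst.comp (hΨ₁ : StrictMonoOn Ψ₁ (Ici 0)) (h₁ : MovesUpFirst Ψ₁)
    (h₂ : MovesUpFirst Ψ₂) : MovesUpFirst (Ψ₁ ∘ Ψ₂) := by
  intro a ha
  obtain ⟨c, hc⟩ := exists_isFirst ⟨a, movedSet_comp_subset ha.1⟩
  obtain ⟨hc', hup⟩ := isFirst_movedSet_comp hΨ₁ h₁ h₂ hc
  rwa [ha.eq hc']

lemma movedSet_comp_nonempty (hΨ₁ : StrictMonoOn Ψ₁ (Ici 0)) (h₁ : MovesUpFirst Ψ₁)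
    (h₂ : MovesUpFirst Ψ₂) (hne : (movedSet Ψ₁ ∪ movedSet Ψ₂).Nonempty) :
    (movedSet (Ψ₁ ∘ Ψ₂)).Nonempty :=
  let ⟨_, hc⟩ := exists_isFirst hne
  ⟨_, (isFirst_movedSet_comp hΨ₁ h₁ h₂ hc).1.1⟩

lemma movesUpFirst_foldr {ℓ : List (ℝ → ℝ)} (hmono : ∀ Ψ ∈ ℓ, StrictMonoOn Ψ (Ici 0))
    (hup : ∀ Ψ ∈ ℓ, MovesUpFirst Ψ) : MovesUpFirst (ℓ.foldr (· ∘ ·) id) := by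
  induction ℓ with
  | nil => exact fun a ha => absurd rfl ha.1.2
  | cons Ψ ℓ ih =>
    simp only [List.mem_cons, forall_eq_or_imp] at hmono hup
    exact MovesUpFirst.comp (Ψ₁ := Ψ) hmono.1 hup.1 (ih hmono.2 hup.2)

lemma movedSet_foldr_nonempty {ℓ : List (ℝ → ℝ)} (hmono : ∀ Ψ ∈ ℓ, StrictMonoOn Ψ (Ici 0))
    (hup : ∀ Ψ ∈ ℓ, MovesUpFirst Ψ) (hne : ∃ Ψ ∈ ℓ, (movedSet Ψ).Nonempty) :
    (movedSet (ℓ.foldr (· ∘ ·) id)).Nonempty := by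
  induction ℓ with
  | nil => simp at hne
  | cons Ψ ℓ ih =>
    simp only [List.mem_cons, forall_eq_or_imp, exists_eq_or_imp] at hmono hup hne
    refine movedSet_comp_nonempty (Ψ₁ := Ψ) hmono.1 hup.1 (movesUpFirst_foldr hmono.2 hup.2) ?_
    rcases hne with h | h
    · exact h.mono subset_union_left
    · exact (ih hmono.2 hup.2 h).mono subset_union_right

end LeftOrder

lemma exists_signs {ι κ σ : Type*} [LinearOrder κ] [WellFoundedLT κ]
    (Active : κ → ι → Prop) (Good : κ → ι → σ → Prop)
    (hactive : ∀ i, ∃ k, Active k i) (hgood : ∀ k i, ∃ e, Good k i e) :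
    ∃ ε : ι → σ, ∀ S : Set ι, S.Nonempty →
      ∃ k, (∀ i ∈ S, Active k i → Good k i (ε i)) ∧ ∃ i ∈ S, Active k i := by
  have wf : WellFounded ((· < ·) : κ → κ → Prop) := wellFounded_lt
  let first (i : ι) : κ := wf.min {k | Active k i} (hactive i)
  choose ε hε using fun i => hgood (first i) i
  refine ⟨ε, fun S ⟨i₀, hi₀⟩ => ?_⟩
  have hne : {k | ∃ i ∈ S, Active k i}.Nonempty :=
    ⟨first i₀, i₀, hi₀, wf.min_mem {k | Active k i₀} (hactive i₀)⟩
  obtain ⟨i₁, hi₁, hk⟩ := wf.min_mem _ hne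
  refine ⟨wf.min _ hne, fun i hi hact => ?_, i₁, hi₁, hk⟩
  have hfirst : first i = wf.min _ hne :=
    le_antisymm (wf.min_le hact)
      (wf.min_le (s := {k | ∃ i ∈ S, Active k i}) ⟨i, hi, wf.min_mem _ (hactive i)⟩)
  exact hfirst ▸ hε i

lemma StrictMonoOn.of_rightInvOn {α β : Type*} [LinearOrder α] [LinearOrder β] {f : α → β}
    {g : β → α} {s : Set α} {t : Set β} (hf : StrictMonoOn f s) (hg : MapsTo g t s)
    (hinv : RightInvOn g f t) : StrictMonoOn g t := by
  intro x hx y hy hxy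
  by_contra! hle
  have := hf.monotoneOn (hg hy) (hg hx) hle
  rw [hinv hx, hinv hy] at this
  exact hxy.not_ge this

def IsCoarseLipschitzSelfMap (g : ℝ → ℝ) : Prop :=
  MapsTo g (Ici 0) (Ici 0) ∧ ∃ L, ∀ x y, 0 ≤ x → 0 ≤ y → |g x - g y| ≤ L * |x - y| + L

section CoarseLipschitz

variable {f g h : ℝ → ℝ}

lemma IsCoarseLipschitzSelfMap.id : IsCoarseLipschitzSelfMap id :=
  ⟨mapsTo_id _, 1, fun x y _ _ => by simp⟩

lemma IsCoarseLipschitzSelfMap.comp (hg : IsCoarseLipschitzSelfMap g)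
    (hh : IsCoarseLipschitzSelfMap h) : IsCoarseLipschitzSelfMap (g ∘ h) := by
  obtain ⟨hg0, L, hL⟩ := hg
  obtain ⟨hh0, M, hM⟩ := hh
  have hL0 : 0 ≤ L := by simpa using hL 0 0 le_rfl le_rfl
  refine ⟨hg0.comp hh0, L * M + L, fun x y hx hy => ?_⟩
  calc |g (h x) - g (h y)| ≤ L * |h x - h y| + L := hL _ _ (hh0 hx) (hh0 hy)
    _ ≤ L * (M * |x - y| + M) + L := by gcongr; exact hM x y hx hy
    _ ≤ (L * M + L) * |x - y| + (L * M + L) := by nlinarith [abs_nonneg (x - y)]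

lemma isCoarseLipschitzSelfMap_foldr {ℓ : List (ℝ → ℝ)}
    (hℓ : ∀ g ∈ ℓ, IsCoarseLipschitzSelfMap g) :
    IsCoarseLipschitzSelfMap (ℓ.foldr (· ∘ ·) id) := by
  induction ℓ with
  | nil => exact .id
  | cons g ℓ ih =>
    simp only [List.mem_cons, forall_eq_or_imp] at hℓ
    exact hℓ.1.comp (ih hℓ.2)

lemma IsQI.isCoarseLipschitzSelfMap (hg : IsQI g) : IsCoarseLipschitzSelfMap g :=
  let ⟨hg0, ⟨K, _, hK⟩, _⟩ := hg
  ⟨hg0, K, fun x y hx hy => (hK x y hx hy).2⟩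

lemma IsQI.exists_le_sub (hg : IsQI g) (hmono : MonotoneOn g (Ici 0)) :
    ∃ K > 0, ∃ C, ∀ x y, 0 ≤ x → x ≤ y → (y - x) / K - C ≤ g y - g x := by
  obtain ⟨-, ⟨K, hK1, hK⟩, -⟩ := hg
  refine ⟨K, by positivity, K, fun x y hx hxy => ?_⟩
  have hy : 0 ≤ y := hx.trans hxy
  have hgxy : g x ≤ g y := hmono hx hy hxy
  have := (hK y x hy hx).1
  rw [abs_of_nonneg (sub_nonneg.mpr hxy), abs_of_nonneg (sub_nonneg.mpr hgxy)] at this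
  linarith [one_div_mul_eq_div K (y - x)]

lemma IsQI.of_invOn (hf : IsQI f) (hg : MapsTo g (Ici 0) (Ici 0))
    (hinv : InvOn g f (Ici 0) (Ici 0)) : IsQI g := by
  obtain ⟨hf0, ⟨K, hK1, hK⟩, -⟩ := hf
  have hK0 : 0 < K := by positivity
  refine ⟨fun x hx => hg hx, ⟨K ^ 2, by nlinarith, fun x y hx hy => ?_⟩,
    ⟨1, one_pos, fun z hz => ⟨f z, hf0 z hz, by simp [hinv.1 (mem_Ici.mpr hz)]⟩⟩⟩
  have hfg := hK (g x) (g y) (hg hx) (hg hy)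
  rw [hinv.2 (mem_Ici.mpr hx), hinv.2 (mem_Ici.mpr hy)] at hfg
  set d := |g x - g y|
  set e := |x - y|
  have hd : 0 ≤ d := abs_nonneg _
  have he : 0 ≤ e := abs_nonneg _
  have h1 : d ≤ K * e + K ^ 2 := by
    have := hfg.1
    rw [div_mul_eq_mul_div, one_mul, sub_le_iff_le_add, div_le_iff₀ hK0] at this
    nlinarith
  have h2 : e ≤ K * d + K := hfg.2
  have hKK : K ≤ K ^ 2 := by nlinarith
  constructor
  · rw [div_mul_eq_mul_div, one_mul, sub_le_iff_le_add, div_le_iff₀ (by positivity)]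
    nlinarith [mul_le_mul_of_nonneg_left hKK hd]
  · nlinarith [mul_le_mul_of_nonneg_right hKK he]

end CoarseLipschitz

lemma Ultrafilter.tendsto_limUnder_of_eventually_mem {X α : Type*} [TopologicalSpace X] [Nonempty X]
    {𝒰 : Ultrafilter α} {u : α → X} {s : Set X} (hs : IsCompact s) (hu : ∀ᶠ a in 𝒰, u a ∈ s) :
    Tendsto u ↑𝒰 (𝓝 (limUnder 𝒰 u)) :=
  let ⟨_, _, hx⟩ := hs.ultrafilter_le_nhds' (𝒰.map u) hu
  tendsto_nhds_limUnder ⟨_, hx⟩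

-- A junk value unless the quotients converge, as they do along ultrafilters for coarsely
-- Lipschitz maps (`tendsto_scaledLimit`).
noncomputable def scaledLimit (𝒰 : Ultrafilter ℝ) (g : ℝ → ℝ) (τ : ℝ) : ℝ :=
  limUnder (𝒰 : Filter ℝ) fun s => g (s * τ) / s

section ScaledLimit

variable {𝒰 : Ultrafilter ℝ} {g h : ℝ → ℝ} {τ : ℝ}

lemma tendsto_scaledLimit (h𝒰 : ↑𝒰 ≤ (atTop : Filter ℝ)) (hg : IsCoarseLipschitzSelfMap g)
    (hτ : 0 ≤ τ) :
    Tendsto (fun s => g (s * τ) / s) ↑𝒰 (𝓝 (scaledLimit 𝒰 g τ)) := by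
  obtain ⟨hg0, L, hL⟩ := hg
  have hL0 : 0 ≤ L := by simpa using hL 0 0 le_rfl le_rfl
  have hg00 : 0 ≤ g 0 := hg0 (le_refl (0 : ℝ))
  refine Ultrafilter.tendsto_limUnder_of_eventually_mem (isCompact_Icc (a := 0)
    (b := g 0 + L * τ + L)) ?_
  filter_upwards [h𝒰 (eventually_ge_atTop 1)] with s hs
  have hs0 : 0 < s := one_pos.trans_le hs
  have hsτ : 0 ≤ s * τ := by positivity
  have hgrowth : g (s * τ) ≤ g 0 + (L * (s * τ) + L) := by
    have := (abs_le.mp (hL (s * τ) 0 hsτ le_rfl)).2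
    rw [sub_zero, abs_of_nonneg hsτ] at this
    linarith
  refine ⟨div_nonneg (hg0 hsτ) hs0.le, (div_le_iff₀ hs0).mpr ?_⟩
  nlinarith [mul_le_mul_of_nonneg_left hs hg00, mul_le_mul_of_nonneg_left hs hL0]

lemma scaledLimit_nonneg (h𝒰 : ↑𝒰 ≤ (atTop : Filter ℝ)) (hg : IsCoarseLipschitzSelfMap g)
    (hτ : 0 ≤ τ) : 0 ≤ scaledLimit 𝒰 g τ := by
  refine ge_of_tendsto (tendsto_scaledLimit h𝒰 hg hτ) ?_
  filter_upwards [h𝒰 (eventually_gt_atTop 0)] with s hs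
  exact div_nonneg (hg.1 (mem_Ici.mpr (by positivity))) hs.le

lemma scaledLimit_id (h𝒰 : ↑𝒰 ≤ (atTop : Filter ℝ)) : scaledLimit 𝒰 id τ = τ := by
  refine (tendsto_nhds_of_eventually_eq ?_).limUnder_eq
  filter_upwards [h𝒰 (eventually_ne_atTop 0)] with s hs
  simp [mul_div_cancel_left₀ τ hs]

lemma tendsto_scaledLimit_of_tendsto (h𝒰 : ↑𝒰 ≤ (atTop : Filter ℝ))
    (hg : IsCoarseLipschitzSelfMap g) {u : ℝ → ℝ} {b : ℝ} (hu : Tendsto u ↑𝒰 (𝓝 b)) (hb : 0 ≤ b)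
    (hu0 : ∀ᶠ s in ↑𝒰, 0 ≤ u s) :
    Tendsto (fun s => g (s * u s) / s) ↑𝒰 (𝓝 (scaledLimit 𝒰 g b)) := by
  obtain ⟨L, hL⟩ := hg.2
  have herror : Tendsto (fun s => L * |u s - b| + L / s) ↑𝒰 (𝓝 0) := by
    have hub : Tendsto (fun s => |u s - b|) ↑𝒰 (𝓝 0) := by
      simpa using (hu.sub_const b).abs
    simpa using (hub.const_mul L).add (tendsto_const_nhds.div_atTop (tendsto_id.mono_left h𝒰))
  have hclose : Tendsto (fun s => g (s * u s) / s - g (s * b) / s) ↑𝒰 (𝓝 0) := by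
    refine squeeze_zero_norm' ?_ herror
    filter_upwards [h𝒰 (eventually_gt_atTop 0), hu0] with s hs hus
    have hgap := hL (s * u s) (s * b) (by positivity) (by positivity)
    rw [← mul_sub, abs_mul, abs_of_pos hs] at hgap
    rw [Real.norm_eq_abs, ← sub_div, abs_div, abs_of_pos hs, div_le_iff₀ hs, add_mul,
      div_mul_cancel₀ L hs.ne']
    linarith
  simpa using hclose.add (tendsto_scaledLimit h𝒰 hg hb)

lemma scaledLimit_comp (h𝒰 : ↑𝒰 ≤ (atTop : Filter ℝ)) (hg : IsCoarseLipschitzSelfMap g)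
    (hh : IsCoarseLipschitzSelfMap h) (hτ : 0 ≤ τ) :
    scaledLimit 𝒰 (g ∘ h) τ = scaledLimit 𝒰 g (scaledLimit 𝒰 h τ) := by
  refine Tendsto.limUnder_eq ?_
  have hu0 : ∀ᶠ s in ↑𝒰, 0 ≤ h (s * τ) / s := by
    filter_upwards [h𝒰 (eventually_gt_atTop 0)] with s hs
    exact div_nonneg (hh.1 (mem_Ici.mpr (by positivity))) hs.le
  refine (tendsto_scaledLimit_of_tendsto h𝒰 hg (tendsto_scaledLimit h𝒰 hh hτ)
    (scaledLimit_nonneg h𝒰 hh hτ) hu0).congr' ?_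
  filter_upwards [h𝒰 (eventually_ne_atTop 0)] with s hs
  rw [mul_div_cancel₀ _ hs, Function.comp_apply]

lemma scaledLimit_foldr (h𝒰 : ↑𝒰 ≤ (atTop : Filter ℝ)) {ℓ : List (ℝ → ℝ)}
    (hℓ : ∀ g ∈ ℓ, IsCoarseLipschitzSelfMap g) (hτ : 0 ≤ τ) :
    scaledLimit 𝒰 (ℓ.foldr (· ∘ ·) id) τ = (ℓ.map (scaledLimit 𝒰)).foldr (· ∘ ·) id τ := by
  induction ℓ with
  | nil => exact scaledLimit_id h𝒰
  | cons g ℓ ih =>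
    simp only [List.mem_cons, forall_eq_or_imp] at hℓ
    simp only [List.foldr_cons, List.map_cons, Function.comp_apply]
    rw [scaledLimit_comp h𝒰 hℓ.1 (isCoarseLipschitzSelfMap_foldr hℓ.2) hτ, ih hℓ.2]

lemma le_scaledLimit_sub_scaledLimit (h𝒰 : ↑𝒰 ≤ (atTop : Filter ℝ))
    (hg : IsCoarseLipschitzSelfMap g) {K C : ℝ}
    (hlow : ∀ x y, 0 ≤ x → x ≤ y → (y - x) / K - C ≤ g y - g x) {τ τ' : ℝ} (hτ : 0 ≤ τ)
    (hττ' : τ ≤ τ') : (τ' - τ) / K ≤ scaledLimit 𝒰 g τ' - scaledLimit 𝒰 g τ := by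
  have hbound : Tendsto (fun s => (τ' - τ) / K - C / s) ↑𝒰 (𝓝 ((τ' - τ) / K)) := by
    simpa using tendsto_const_nhds.sub (tendsto_const_nhds.div_atTop (tendsto_id.mono_left h𝒰))
  refine le_of_tendsto_of_tendsto hbound ((tendsto_scaledLimit h𝒰 hg (hτ.trans hττ')).sub
    (tendsto_scaledLimit h𝒰 hg hτ)) ?_
  filter_upwards [h𝒰 (eventually_gt_atTop 0)] with s hs
  have := hlow (s * τ) (s * τ') (by positivity) (by gcongr)
  rw [← sub_div, le_div_iff₀ hs]
  calc ((τ' - τ) / K - C / s) * s = (s * τ' - s * τ) / K - C := by field_simp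
    _ ≤ _ := this

lemma scaledLimit_strictMonoOn (h𝒰 : ↑𝒰 ≤ (atTop : Filter ℝ)) (hg : IsQI g)
    (hmono : StrictMonoOn g (Ici 0)) : StrictMonoOn (scaledLimit 𝒰 g) (Ici 0) := by
  obtain ⟨K, hK, C, hlow⟩ := hg.exists_le_sub hmono.monotoneOn
  intro τ hτ τ' _ hlt
  have := le_scaledLimit_sub_scaledLimit h𝒰 hg.isCoarseLipschitzSelfMap hlow hτ hlt.le
  have : 0 < (τ' - τ) / K := div_pos (sub_pos.mpr hlt) hK
  linarith

lemma scaledLimit_eq_of_tendsto (h𝒰 : ↑𝒰 ≤ (atTop : Filter ℝ))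
    (hg : Tendsto (fun x => g x / x) atTop (𝓝 1)) (hτ : 0 < τ) : scaledLimit 𝒰 g τ = τ := by
  refine Tendsto.limUnder_eq ?_
  have := (hg.comp ((tendsto_id.mono_left h𝒰).atTop_mul_const hτ)).mul_const τ
  rw [one_mul] at this
  refine this.congr' ?_
  filter_upwards [h𝒰 (eventually_ne_atTop 0)] with s hs
  simp only [Function.comp_apply, id]
  field_simp

lemma exists_scaledLimit_ne_of_not_tendsto (hg : IsCoarseLipschitzSelfMap g)
    (h : ¬ Tendsto (fun x => g x / x) atTop (𝓝 1)) :
    ∃ 𝒰 : Ultrafilter ℝ, ↑𝒰 ≤ (atTop : Filter ℝ) ∧ scaledLimit 𝒰 g 1 ≠ 1 := by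
  rw [tendsto_iff_ultrafilter] at h
  push Not at h
  obtain ⟨𝒰, h𝒰, hne⟩ := h
  exact ⟨𝒰, h𝒰, fun h1 => hne (by simpa [h1] using tendsto_scaledLimit h𝒰 hg zero_le_one)⟩

end ScaledLimit

lemma scaledLimit_leftInvOn {𝒰 : Ultrafilter ℝ} {g h : ℝ → ℝ} (h𝒰 : ↑𝒰 ≤ (atTop : Filter ℝ))
    (hg : IsCoarseLipschitzSelfMap g) (hh : IsCoarseLipschitzSelfMap h)
    (hinv : LeftInvOn h g (Ici 0)) : LeftInvOn (scaledLimit 𝒰 h) (scaledLimit 𝒰 g) (Ioi 0) := by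
  intro τ hτ
  rw [← scaledLimit_comp h𝒰 hh hg (le_of_lt hτ)]
  refine scaledLimit_eq_of_tendsto h𝒰 (tendsto_nhds_of_eventually_eq ?_) hτ
  filter_upwards [eventually_gt_atTop 0] with x hx
  rw [Function.comp_apply, hinv (mem_Ici.mpr hx.le), div_self hx.ne']

theorem not_tendsto_foldr_div_self {𝒰 : Ultrafilter ℝ} (h𝒰 : ↑𝒰 ≤ (atTop : Filter ℝ))
    {ℓ : List (ℝ → ℝ)} (hℓ : ∀ g ∈ ℓ, IsQI g ∧ StrictMonoOn g (Ici 0))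
    (hup : ∀ g ∈ ℓ, MovesUpFirst (scaledLimit 𝒰 g))
    (hmoved : ∃ g ∈ ℓ, (movedSet (scaledLimit 𝒰 g)).Nonempty) :
    ¬ Tendsto (fun x => ℓ.foldr (· ∘ ·) id x / x) atTop (𝓝 1) := by
  intro hw
  have hmono : ∀ Ψ ∈ ℓ.map (scaledLimit 𝒰), StrictMonoOn Ψ (Ici 0) :=
    List.forall_mem_map.mpr fun g hg => scaledLimit_strictMonoOn h𝒰 (hℓ g hg).1 (hℓ g hg).2
  obtain ⟨a, ha, hne⟩ := movedSet_foldr_nonempty hmono (List.forall_mem_map.mpr hup)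
    (by simpa using hmoved)
  rw [← scaledLimit_foldr h𝒰 (fun g hg => (hℓ g hg).1.isCoarseLipschitzSelfMap) ha.le] at hne
  exact hne (scaledLimit_eq_of_tendsto h𝒰 hw ha)

theorem exists_signs_not_tendsto_foldr_div_self {ι : Type*} [LinearOrder ι] [WellFoundedLT ι]
    (L : ι → Bool → ℝ → ℝ) (hL : ∀ i b, IsQI (L i b) ∧ StrictMonoOn (L i b) (Ici 0))
    (hinv : ∀ i, InvOn (L i false) (L i true) (Ici 0) (Ici 0))
    (hnt : ∀ i, ¬ Tendsto (fun x => L i true x / x) atTop (𝓝 1)) :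
    ∃ ε : ι → Bool, ∀ w : List ι, w ≠ [] →
      ¬ Tendsto (fun x => (w.map fun i => L i (ε i)).foldr (· ∘ ·) id x / x) atTop (𝓝 1) := by
  have hL' (i b) : IsCoarseLipschitzSelfMap (L i b) := (hL i b).1.isCoarseLipschitzSelfMap
  have hψinv {𝒰 : Ultrafilter ℝ} (h𝒰 : ↑𝒰 ≤ (atTop : Filter ℝ)) (i : ι) :
      InvOn (scaledLimit 𝒰 (L i false)) (scaledLimit 𝒰 (L i true)) (Ioi 0) (Ioi 0) :=
    ⟨scaledLimit_leftInvOn h𝒰 (hL' i true) (hL' i false) (hinv i).1,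
      scaledLimit_leftInvOn h𝒰 (hL' i false) (hL' i true) (hinv i).2⟩
  have hmoved {𝒰 : Ultrafilter ℝ} (h𝒰 : ↑𝒰 ≤ (atTop : Filter ℝ)) (i : ι) :
      ∀ b, movedSet (scaledLimit 𝒰 (L i b)) = movedSet (scaledLimit 𝒰 (L i true))
    | false => (movedSet_eq_of_invOn (hψinv h𝒰 i)).symm
    | true => rfl
  choose 𝒰 h𝒰 hne using fun i => exists_scaledLimit_ne_of_not_tendsto (hL' i true) (hnt i)
  have hsign (k i) : ∃ b, MovesUpFirst (scaledLimit (𝒰 k) (L i b)) :=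
    (movesUpFirst_or_of_invOn (scaledLimit_strictMonoOn (h𝒰 k) (hL i false).1 (hL i false).2)
      (fun τ hτ => scaledLimit_nonneg (h𝒰 k) (hL' i true) hτ) (hψinv (h𝒰 k) i)).elim
      (⟨true, ·⟩) (⟨false, ·⟩)
  obtain ⟨ε, hε⟩ := exists_signs (fun k i => (movedSet (scaledLimit (𝒰 k) (L i true))).Nonempty)
    (fun k i b => MovesUpFirst (scaledLimit (𝒰 k) (L i b))) (fun i => ⟨i, 1, one_pos, hne i⟩)
    hsign
  refine ⟨ε, fun w hw => ?_⟩
  obtain ⟨k, hup, i, hi, hact⟩ := hε {i | i ∈ w} (List.exists_mem_of_ne_nil w hw)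
  refine not_tendsto_foldr_div_self (h𝒰 k) (List.forall_mem_map.mpr fun i _ => hL i (ε i))
    (List.forall_mem_map.mpr fun j hj => ?_) ⟨L i (ε i), List.mem_map_of_mem hi, ?_⟩
  · by_cases hactj : (movedSet (scaledLimit (𝒰 k) (L j true))).Nonempty
    · exact hup j hj hactj
    · rw [not_nonempty_iff_eq_empty, ← hmoved (h𝒰 k) j (ε j)] at hactj
      exact fun a ha => absurd ha.1 (hactj ▸ notMem_empty a)
  · rwa [hmoved (h𝒰 k) i]

theorem stmt8_general (n : ℕ) (f finv : Fin n → ℝ → ℝ)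
    (hqi : ∀ i, IsQI (f i))
    (hmono : ∀ i, StrictMonoOn (f i) (Set.Ici 0))
    (hbij : ∀ i, Set.BijOn (f i) (Set.Ici 0) (Set.Ici 0))
    (hinv : ∀ i, ∀ x : ℝ, 0 ≤ x → finv i (f i x) = x ∧ f i (finv i x) = x)
    (hnt : ∀ i, ¬ Tendsto (fun x => f i x / x) atTop (𝓝 1)) :
    ∃ ε : Fin n → Bool, ∀ m : ℕ, 0 < m → ∀ idx : Fin m → Fin n,
      ¬ Tendsto (fun x =>
          ((List.ofFn fun j : Fin m =>
            if ε (idx j) then f (idx j) else finv (idx j)).foldr (· ∘ ·) id) x / x)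
        atTop (𝓝 1) := by
  have hinvOn (i) : InvOn (finv i) (f i) (Ici 0) (Ici 0) :=
    ⟨fun x hx => (hinv i x hx).1, fun x hx => (hinv i x hx).2⟩
  have hmaps (i) : MapsTo (finv i) (Ici 0) (Ici 0) := (hinvOn i).1.mapsTo (hbij i).surjOn
  have hL : ∀ i (b : Bool), IsQI (if b then f i else finv i) ∧
      StrictMonoOn (if b then f i else finv i) (Ici 0)
    | i, true => ⟨hqi i, hmono i⟩
    | i, false => ⟨(hqi i).of_invOn (hmaps i) (hinvOn i),
        (hmono i).of_rightInvOn (hmaps i) (hinvOn i).2⟩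
  obtain ⟨ε, hε⟩ := exists_signs_not_tendsto_foldr_div_self _ hL hinvOn hnt
  refine ⟨ε, fun m hm idx => ?_⟩
  simpa [List.map_ofFn, Function.comp_def] using
    hε (List.ofFn idx) (by simpa [List.ofFn_eq_nil_iff] using hm.ne')

/-- given finitely many strictly increasing quasi-isometric homeomorphisms
`fᵢ` of `[0,∞)`, none satisfying `fᵢ(x)/x → 1`, there are signs `εᵢ` such that no
nonempty composition of the `fᵢ^{εᵢ}` satisfies `w(x)/x → 1`. (Navas's criterion for
left-orderability of `QI(ℝ₊)/H`.) -/
theorem stmt8 (n : ℕ) (f finv : Fin n → ℝ → ℝ)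
    (hqi : ∀ i, IsQI (f i))
    (hcont : ∀ i, ContinuousOn (f i) (Set.Ici 0))
    (hmono : ∀ i, StrictMonoOn (f i) (Set.Ici 0))
    (hbij : ∀ i, Set.BijOn (f i) (Set.Ici 0) (Set.Ici 0))
    (hinv : ∀ i, ∀ x : ℝ, 0 ≤ x → finv i (f i x) = x ∧ f i (finv i x) = x)
    (hnt : ∀ i, ¬ Tendsto (fun x => f i x / x) atTop (𝓝 1)) :
    ∃ ε : Fin n → Bool, ∀ m : ℕ, 0 < m → ∀ idx : Fin m → Fin n,
      ¬ Tendsto (fun x =>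
          ((List.ofFn fun j : Fin m =>
            if ε (idx j) then f (idx j) else finv (idx j)).foldr (· ∘ ·) id) x / x)
        atTop (𝓝 1) :=
  stmt8_general n f finv hqi hmono hbij hinv hnt
end
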